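/- Let A ∈ ℝ^{n×n}, B ∈ ℝ^{n×ℓ}, let V_k be a matrix with orthonormal columns whose column space contains the block Krylov subspace K_k(A,B), and set H_k = V_kᵀ A V_k. Then for all t, s > 0: ‖(e^{tA} − V_k e^{tH_k} V_kᵀ) e^{sA} B‖ ≤ 4 max{1, e^{(t+s)μ(A)}} (‖(t+s)A‖^k / k!) ‖B‖. -/

import Mathlib

open Matrix
open scoped Matrix.Norms.L2Operator

noncomputable section

/-- The logarithmic norm `μ(A)`: the maximum of the real parts of the field of values
`F(A) = {x* A x : ‖x‖ = 1}` of `A`, viewed as a complex matrix. -/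
def logNorm {n : ℕ} (A : Matrix (Fin n) (Fin n) ℝ) : ℝ :=
  sSup {r : ℝ | ∃ x : EuclideanSpace ℂ (Fin n), ‖x‖ = 1 ∧
    r = (dotProduct (star (x : Fin n → ℂ)) ((A.map Complex.ofReal).mulVec x)).re}

/-- The function `φ₁(z) = (e^z - 1)/z = ∑_{ℓ≥0} z^ℓ/(ℓ+1)!`. -/
def phi1 (z : ℝ) : ℝ := ∑' k : ℕ, z ^ k / (Nat.factorial (k + 1) : ℝ)

/-- Matrix exponential. -/
def mexp {n : ℕ} (A : Matrix (Fin n) (Fin n) ℝ) : Matrix (Fin n) (Fin n) ℝ :=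
  NormedSpace.exp A

/-- The block Krylov subspace `K_k(A,B) = span{B, AB, …, A^{k-1}B}` (the span of
the columns of the matrices `A^i B`, `i < k`). -/
def blockKrylov {n : ℕ} {ι : Type*} (A : Matrix (Fin n) (Fin n) ℝ) (B : Matrix (Fin n) ι ℝ)
    (k : ℕ) : Submodule ℝ (Fin n → ℝ) :=
  Submodule.span ℝ {v | ∃ i < k, ∃ j, v = ((A ^ i * B)ᵀ) j}

/-- The column space of a matrix. -/
def colSpace {n m : ℕ} (V : Matrix (Fin n) (Fin m) ℝ) : Submodule ℝ (Fin n → ℝ) :=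
  Submodule.span ℝ (Set.range Vᵀ)

/-!
Split `e^{sA} B` into its Taylor part `∑_{j<k} s^j/j! A^j B` and a remainder. Since `V Vᵀ` fixes
`K_k(A,B)`, `V p(tH) Vᵀ A^j B = p(tA) A^j B` for every polynomial `p` of degree `< k - j`, so on
`A^j B` the error is the difference of the Taylor remainders of order `k - j` of `e^{tA}` and
`e^{tH}`. The field of values of `H = Vᵀ A V` lies in that of `A`, and `e^{-2μτ} ‖e^{τA} x‖²` is
nonincreasing, so `‖e^{τA}‖, ‖e^{τH}‖ ≤ e^{τμ(A)}`; hence a Taylor remainder of order `q` is at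
most `max{1, e^{τμ}} (τ‖A‖)^q/q!`. The bounds for the `k + 1` pieces add up to the binomial
expansion of `(t+s)^k/k!`.
-/

open scoped RealInnerProductSpace
open Finset

section Dissipative

variable {E : Type*} [NormedAddCommGroup E] [InnerProductSpace ℝ E] [CompleteSpace E]

theorem ContinuousLinearMap.norm_exp_smul_le_of_inner_le (T : E →L[ℝ] E) {c : ℝ}
    (hT : ∀ x, ⟪x, T x⟫ ≤ c * ‖x‖ ^ 2) {σ : ℝ} (hσ : 0 ≤ σ) :
    ‖NormedSpace.exp (σ • T)‖ ≤ Real.exp (σ * c) := by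
  refine opNorm_le_bound _ (Real.exp_pos _).le fun x => ?_
  set u : ℝ → E := fun τ => NormedSpace.exp (τ • T) x
  have hu : ∀ τ, HasDerivAt u (T (u τ)) τ := fun τ => by
    simpa using (hasDerivAt_exp_smul_const' (𝕂 := ℝ) T τ).clm_apply (hasDerivAt_const τ x)
  -- `τ ↦ e^{-2cτ} ‖u τ‖²` is antitone because `d/dτ ‖u τ‖² = 2⟪u τ, T (u τ)⟫ ≤ 2c ‖u τ‖²`.
  set g : ℝ → ℝ := fun τ => Real.exp (-(2 * c) * τ) * ‖u τ‖ ^ 2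
  have hg : ∀ τ, HasDerivAt g
      (Real.exp (-(2 * c) * τ) * (2 * (⟪u τ, T (u τ)⟫ - c * ‖u τ‖ ^ 2))) τ := by
    intro τ
    have hexp : HasDerivAt (fun τ => Real.exp (-(2 * c) * τ))
        (Real.exp (-(2 * c) * τ) * (-(2 * c))) τ := by
      simpa using ((hasDerivAt_id τ).const_mul (-(2 * c))).exp
    exact (hexp.mul (hu τ).norm_sq).congr_deriv (by ring)
  have hanti : Antitone g := antitone_of_deriv_nonpos (fun τ => (hg τ).differentiableAt)
    fun τ => (hg τ).deriv ▸ mul_nonpos_of_nonneg_of_nonpos (Real.exp_pos _).le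
      (by linarith [hT (u τ)])
  have hgσ : g σ ≤ ‖x‖ ^ 2 := by simpa [g, u] using hanti hσ
  have hsq : ‖u σ‖ ^ 2 ≤ (Real.exp (σ * c) * ‖x‖) ^ 2 := by
    have hcancel : Real.exp (2 * c * σ) * g σ = ‖u σ‖ ^ 2 := by
      rw [← mul_assoc, ← Real.exp_add, show 2 * c * σ + -(2 * c) * σ = 0 by ring, Real.exp_zero,
        one_mul]
    rw [← hcancel, mul_pow, ← Real.exp_nat_mul, Nat.cast_ofNat,
      show 2 * (σ * c) = 2 * c * σ by ring]
    exact mul_le_mul_of_nonneg_left hgσ (Real.exp_pos _).le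
  exact (sq_le_sq₀ (norm_nonneg _) (by positivity)).mp hsq

end Dissipative

namespace Matrix

variable {ι : Type*} [Fintype ι] [DecidableEq ι]

theorem continuous_toEuclideanCLM : Continuous (toEuclideanCLM (𝕜 := ℝ) (n := ι)) :=
  LinearMap.continuous_of_finiteDimensional
    (toEuclideanCLM (𝕜 := ℝ) (n := ι)).toAlgEquiv.toLinearMap

theorem norm_exp_smul_le_of_dotProduct_mulVec_le (X : Matrix ι ι ℝ) {c : ℝ}
    (hX : ∀ x : ι → ℝ, x ⬝ᵥ X *ᵥ x ≤ c * (x ⬝ᵥ x)) {σ : ℝ} (hσ : 0 ≤ σ) :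
    ‖NormedSpace.exp (σ • X)‖ ≤ Real.exp (σ * c) := by
  rw [cstar_norm_def, NormedSpace.map_exp_of_mem_ball (𝕂 := ℝ) _ continuous_toEuclideanCLM _
    (by simp [NormedSpace.expSeries_radius_eq_top]), map_smul]
  refine (toEuclideanCLM (𝕜 := ℝ) X).norm_exp_smul_le_of_inner_le (fun x => ?_) hσ
  rw [inner_toEuclideanCLM, ← real_inner_self_eq_norm_sq, EuclideanSpace.inner_eq_star_dotProduct]
  simpa using hX x

end Matrix

section LogNorm

variable {n : ℕ}

theorem Matrix.star_dotProduct_mulVec_eq_inner {𝕜 ι : Type*} [RCLike 𝕜] [Fintype ι]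
    [DecidableEq ι] (M : Matrix ι ι 𝕜) (z : EuclideanSpace 𝕜 ι) :
    star (z : ι → 𝕜) ⬝ᵥ M *ᵥ z = inner 𝕜 z (toEuclideanCLM (𝕜 := 𝕜) M z) := by
  rw [EuclideanSpace.inner_eq_star_dotProduct, ofLp_toEuclideanCLM, dotProduct_comm]

theorem re_inner_le_logNorm (A : Matrix (Fin n) (Fin n) ℝ) (z : EuclideanSpace ℂ (Fin n)) :
    (inner ℂ z (toEuclideanCLM (𝕜 := ℂ) (A.map Complex.ofReal) z)).re ≤ logNorm A * ‖z‖ ^ 2 := by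
  set T := toEuclideanCLM (𝕜 := ℂ) (A.map Complex.ofReal)
  have hbdd : BddAbove {r : ℝ | ∃ x : EuclideanSpace ℂ (Fin n), ‖x‖ = 1 ∧
      r = (star (x : Fin n → ℂ) ⬝ᵥ (A.map Complex.ofReal) *ᵥ x).re} := by
    refine ⟨‖T‖, ?_⟩
    rintro r ⟨x, hx, rfl⟩
    rw [Matrix.star_dotProduct_mulVec_eq_inner]
    calc _ ≤ ‖inner ℂ x (T x)‖ := Complex.re_le_norm _
      _ ≤ ‖x‖ * (‖T‖ * ‖x‖) := (norm_inner_le_norm _ _).trans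
          (mul_le_mul_of_nonneg_left (T.le_opNorm x) (norm_nonneg _))
      _ = ‖T‖ := by rw [hx]; ring
  rcases eq_or_ne z 0 with rfl | hz
  · simp
  have hz' : (0 : ℝ) < ‖z‖ := norm_pos_iff.mpr hz
  set w := ((‖z‖⁻¹ : ℝ) : ℂ) • z
  have hw : ‖w‖ = 1 := by
    rw [norm_smul, Complex.norm_real, norm_inv, norm_norm, inv_mul_cancel₀ hz'.ne']
  have hle : (inner ℂ w (T w)).re ≤ logNorm A :=
    le_csSup hbdd ⟨w, hw, by rw [Matrix.star_dotProduct_mulVec_eq_inner]⟩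
  have hscale : (inner ℂ w (T w)).re = ‖z‖⁻¹ ^ 2 * (inner ℂ z (T z)).re := by
    simp only [w, map_smul, inner_smul_left, inner_smul_right, Complex.conj_ofReal, ← mul_assoc,
      ← Complex.ofReal_mul, Complex.re_ofReal_mul]
    ring
  rw [hscale] at hle
  have := mul_le_mul_of_nonneg_left hle (sq_nonneg ‖z‖)
  rwa [← mul_assoc, ← mul_pow, mul_inv_cancel₀ hz'.ne', one_pow, one_mul, mul_comm] at this

theorem dotProduct_mulVec_le_logNorm (A : Matrix (Fin n) (Fin n) ℝ) (x : Fin n → ℝ) :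
    x ⬝ᵥ A *ᵥ x ≤ logNorm A * (x ⬝ᵥ x) := by
  set z : EuclideanSpace ℂ (Fin n) := WithLp.toLp 2 (fun i => (x i : ℂ))
  have hq : (inner ℂ z (toEuclideanCLM (𝕜 := ℂ) (A.map Complex.ofReal) z)).re = x ⬝ᵥ A *ᵥ x := by
    simp [z, EuclideanSpace.inner_eq_star_dotProduct, dotProduct, mulVec, Complex.re_sum, mul_comm]
  have hn : ‖z‖ ^ 2 = x ⬝ᵥ x := by
    rw [EuclideanSpace.norm_sq_eq]
    simp [z, dotProduct, sq]
  simpa [hq, hn] using re_inner_le_logNorm A z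

end LogNorm

section ExpTaylor

variable {𝔸 : Type*} [NormedRing 𝔸] [NormedAlgebra ℝ 𝔸]

def expTaylor (X : 𝔸) (τ : ℝ) (q : ℕ) : 𝔸 :=
  ∑ i ∈ range q, (τ ^ i / i.factorial) • X ^ i

theorem expTaylor_zero (X : 𝔸) (τ : ℝ) : expTaylor X τ 0 = 0 := by
  simp [expTaylor]

theorem expTaylor_succ_at_zero (X : 𝔸) (q : ℕ) : expTaylor X 0 (q + 1) = 1 := by
  simp [expTaylor, sum_range_succ']

theorem hasDerivAt_expTaylor_succ (X : 𝔸) (q : ℕ) (τ : ℝ) :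
    HasDerivAt (fun σ => expTaylor X σ (q + 1)) (X * expTaylor X τ q) τ := by
  have hterm : ∀ i, HasDerivAt (fun σ : ℝ => (σ ^ (i + 1) / (i + 1).factorial) • X ^ (i + 1))
      (X * ((τ ^ i / i.factorial) • X ^ i)) τ := fun i => by
    refine (((hasDerivAt_pow (i + 1) τ).div_const _).smul_const _).congr_deriv ?_
    rw [mul_smul_comm, ← pow_succ', Nat.factorial_succ, Nat.add_sub_cancel]
    congr 1
    push_cast
    field_simp
  simp only [expTaylor, sum_range_succ' _ q, pow_zero, Nat.factorial_zero, Nat.cast_one, div_one,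
    one_smul, mul_sum]
  exact (HasDerivAt.fun_sum fun i _ => hterm i).add_const 1

variable [CompleteSpace 𝔸]

theorem norm_exp_smul_sub_expTaylor_le {X : 𝔸} {τ M : ℝ} (hτ : 0 ≤ τ)
    (hM : ∀ σ ∈ Set.Icc 0 τ, ‖NormedSpace.exp (σ • X)‖ ≤ M) (q : ℕ) :
    ‖NormedSpace.exp (τ • X) - expTaylor X τ q‖ ≤ M * (τ ^ q * ‖X‖ ^ q / q.factorial) := by
  suffices ∀ q, ∀ σ ∈ Set.Icc 0 τ, ‖NormedSpace.exp (σ • X) - expTaylor X σ q‖ ≤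
      M * (σ ^ q * ‖X‖ ^ q / q.factorial) from this q τ ⟨hτ, le_rfl⟩
  intro q
  induction q with
  | zero => simpa [expTaylor_zero] using hM
  | succ q ih =>
    have hf : ∀ σ, HasDerivAt (fun σ => NormedSpace.exp (σ • X) - expTaylor X σ (q + 1))
        (X * (NormedSpace.exp (σ • X) - expTaylor X σ q)) σ := fun σ => by
      rw [mul_sub]
      exact (hasDerivAt_exp_smul_const' (𝕂 := ℝ) X σ).sub (hasDerivAt_expTaylor_succ X q σ)
    have hB : ∀ σ, HasDerivAt (fun σ => M * (σ ^ (q + 1) * ‖X‖ ^ (q + 1) / (q + 1).factorial))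
        (M * (σ ^ q * ‖X‖ ^ (q + 1) / q.factorial)) σ := fun σ => by
      refine (((hasDerivAt_pow (q + 1) σ).mul_const _).div_const _).const_mul M |>.congr_deriv ?_
      rw [Nat.factorial_succ, Nat.add_sub_cancel]
      push_cast
      field_simp
    refine image_norm_le_of_norm_deriv_right_le_deriv_boundary
      (fun σ _ => (hf σ).continuousAt.continuousWithinAt) (fun σ _ => (hf σ).hasDerivWithinAt)
      (by simp [expTaylor_succ_at_zero]) hB fun σ hσ => ?_
    calc ‖X * (NormedSpace.exp (σ • X) - expTaylor X σ q)‖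
        ≤ ‖X‖ * (M * (σ ^ q * ‖X‖ ^ q / q.factorial)) :=
          (norm_mul_le _ _).trans (mul_le_mul_of_nonneg_left (ih σ (Set.Ico_subset_Icc_self hσ))
            (norm_nonneg _))
      _ = M * (σ ^ q * ‖X‖ ^ (q + 1) / q.factorial) := by ring

end ExpTaylor

theorem exp_mul_le_max_one_exp {a b c : ℝ} (ha : 0 ≤ a) (hab : a ≤ b) :
    Real.exp (a * c) ≤ max 1 (Real.exp (b * c)) := by
  rcases le_total 0 c with hc | hc
  · exact le_max_of_le_right (Real.exp_le_exp.mpr (mul_le_mul_of_nonneg_right hab hc))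
  · exact le_max_of_le_left (Real.exp_le_one_iff.mpr (mul_nonpos_of_nonneg_of_nonpos ha hc))

theorem Matrix.norm_exp_smul_sub_expTaylor_le_of_dotProduct_mulVec_le {ι : Type*} [Fintype ι]
    [DecidableEq ι] {X : Matrix ι ι ℝ} {c τ : ℝ} (hX : ∀ x, x ⬝ᵥ X *ᵥ x ≤ c * (x ⬝ᵥ x))
    (hτ : 0 ≤ τ) (q : ℕ) :
    ‖NormedSpace.exp (τ • X) - expTaylor X τ q‖ ≤
      max 1 (Real.exp (τ * c)) * (τ ^ q * ‖X‖ ^ q / q.factorial) :=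
  norm_exp_smul_sub_expTaylor_le hτ (fun _ hσ => (norm_exp_smul_le_of_dotProduct_mulVec_le X hX
    hσ.1).trans (exp_mul_le_max_one_exp hσ.1 hσ.2)) q

namespace Matrix

section L2OpNorm

variable {𝕜 : Type*} [RCLike 𝕜] {ι κ ν : Type*} [Fintype ι] [Fintype κ] [Fintype ν]

theorem l2_opNorm_one_le [DecidableEq ι] : ‖(1 : Matrix ι ι 𝕜)‖ ≤ 1 := by
  rw [cstar_norm_def, map_one]
  exact ContinuousLinearMap.norm_id_le

theorem l2_opNorm_le_one_of_conjTranspose_mul_self_eq_one [DecidableEq κ] {V : Matrix ι κ 𝕜}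
    (hV : Vᴴ * V = 1) : ‖V‖ ≤ 1 := by
  have h := l2_opNorm_conjTranspose_mul_self V
  rw [hV] at h
  nlinarith [l2_opNorm_one_le (𝕜 := 𝕜) (ι := κ), norm_nonneg V]

theorem l2_opNorm_mul_mul_le_of_le_one [DecidableEq ι] [DecidableEq κ] [DecidableEq ν]
    {P : Matrix ι κ 𝕜} {Q : Matrix ν ι 𝕜} (X : Matrix κ ν 𝕜) (hP : ‖P‖ ≤ 1) (hQ : ‖Q‖ ≤ 1) :
    ‖P * X * Q‖ ≤ ‖X‖ :=
  calc ‖P * X * Q‖ ≤ ‖P‖ * ‖X‖ * ‖Q‖ :=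
        (l2_opNorm_mul _ _).trans (mul_le_mul_of_nonneg_right (l2_opNorm_mul _ _) (norm_nonneg _))
    _ ≤ 1 * ‖X‖ * 1 := by gcongr
    _ = ‖X‖ := by ring

theorem l2_opNorm_pow_mul_le [DecidableEq ι] [DecidableEq κ] (X : Matrix ι ι 𝕜)
    (Y : Matrix ι κ 𝕜) (j : ℕ) : ‖X ^ j * Y‖ ≤ ‖X‖ ^ j * ‖Y‖ := by
  induction j with
  | zero => simp
  | succ j ih =>
    rw [pow_succ' X, Matrix.mul_assoc, pow_succ' ‖X‖, mul_assoc]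
    exact (l2_opNorm_mul _ _).trans (mul_le_mul_of_nonneg_left ih (norm_nonneg _))

end L2OpNorm

variable {ι κ : Type*} [Fintype ι] [Fintype κ] [DecidableEq κ]

theorem l2_opNorm_le_one_of_transpose_mul_self_eq_one {V : Matrix ι κ ℝ} (hV : Vᵀ * V = 1) :
    ‖V‖ ≤ 1 :=
  l2_opNorm_le_one_of_conjTranspose_mul_self_eq_one (by rwa [conjTranspose_eq_transpose_of_trivial])

theorem l2_opNorm_transpose_le_one_of_transpose_mul_self_eq_one [DecidableEq ι]
    {V : Matrix ι κ ℝ} (hV : Vᵀ * V = 1) : ‖Vᵀ‖ ≤ 1 := by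
  rw [← conjTranspose_eq_transpose_of_trivial, l2_opNorm_conjTranspose]
  exact l2_opNorm_le_one_of_transpose_mul_self_eq_one hV

theorem dotProduct_mulVec_compression_le {A : Matrix ι ι ℝ} {V : Matrix ι κ ℝ} (hV : Vᵀ * V = 1)
    {c : ℝ} (hA : ∀ x, x ⬝ᵥ A *ᵥ x ≤ c * (x ⬝ᵥ x)) (y : κ → ℝ) :
    y ⬝ᵥ (Vᵀ * A * V) *ᵥ y ≤ c * (y ⬝ᵥ y) := by
  have hq : y ⬝ᵥ (Vᵀ * A * V) *ᵥ y = (V *ᵥ y) ⬝ᵥ A *ᵥ (V *ᵥ y) := by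
    rw [← mulVec_mulVec, ← mulVec_mulVec, dotProduct_mulVec _ Vᵀ, vecMul_transpose]
  have hn : (V *ᵥ y) ⬝ᵥ (V *ᵥ y) = y ⬝ᵥ y := by
    rw [dotProduct_mulVec, ← mulVec_transpose, mulVec_mulVec, hV, one_mulVec]
  rw [hq, ← hn]
  exact hA _

end Matrix

theorem add_pow_div_factorial_eq_sum (s t : ℝ) (k : ℕ) :
    (t + s) ^ k / k.factorial =
      ∑ j ∈ range (k + 1), s ^ j / j.factorial * (t ^ (k - j) / (k - j).factorial) := by
  rw [add_comm, add_pow, sum_div]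
  refine sum_congr rfl fun j hj => ?_
  rw [Nat.cast_choose ℝ (Nat.lt_succ_iff.mp (mem_range.mp hj))]
  have := Nat.factorial_pos j
  have := Nat.factorial_pos (k - j)
  have := Nat.factorial_pos k
  field_simp

section Krylov

variable {n m ℓ : ℕ} {A : Matrix (Fin n) (Fin n) ℝ} {B : Matrix (Fin n) (Fin ℓ) ℝ} {k : ℕ}
  {V : Matrix (Fin n) (Fin m) ℝ} {c t s : ℝ}

theorem mul_transpose_mul_eq_of_columns_mem_colSpace (hV : Vᵀ * V = 1) {ι : Type*} [Fintype ι]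
    {M : Matrix (Fin n) ι ℝ} (hM : ∀ j, Mᵀ j ∈ colSpace V) : V * (Vᵀ * M) = M := by
  have hproj : ∀ v ∈ colSpace V, (V * Vᵀ) *ᵥ v = v := by
    intro v hv
    obtain ⟨w, rfl⟩ : v ∈ LinearMap.range V.mulVecLin := by rwa [range_mulVecLin]
    simp only [mulVecLin_apply, mulVec_mulVec, Matrix.mul_assoc, hV, Matrix.mul_one]
  ext r j
  rw [← Matrix.mul_assoc]
  exact congrFun (hproj _ (hM j)) r

theorem krylov_mul_transpose_mul_pow_mul (hV : Vᵀ * V = 1) (hspan : blockKrylov A B k ≤ colSpace V)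
    {i : ℕ} (hi : i < k) : V * (Vᵀ * (A ^ i * B)) = A ^ i * B :=
  mul_transpose_mul_eq_of_columns_mem_colSpace hV fun j =>
    hspan (Submodule.subset_span ⟨i, hi, j, rfl⟩)

theorem krylov_compression_pow_mul (hV : Vᵀ * V = 1) (hspan : blockKrylov A B k ≤ colSpace V)
    {i j : ℕ} (hij : i + j < k) :
    V * ((Vᵀ * A * V) ^ i * (Vᵀ * (A ^ j * B))) = A ^ (i + j) * B := by
  induction i generalizing j with
  | zero => simpa using krylov_mul_transpose_mul_pow_mul hV hspan hij
  | succ i ih =>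
    have hstep : Vᵀ * A * V * (Vᵀ * (A ^ j * B)) = Vᵀ * (A ^ (j + 1) * B) := by
      rw [Matrix.mul_assoc, Matrix.mul_assoc, krylov_mul_transpose_mul_pow_mul hV hspan (by omega),
        ← Matrix.mul_assoc A, ← pow_succ']
    rw [pow_succ, Matrix.mul_assoc, hstep, ih (by omega), show i + (j + 1) = i + 1 + j by omega]

theorem krylov_compression_expTaylor_mul (hV : Vᵀ * V = 1) (hspan : blockKrylov A B k ≤ colSpace V)
    {q j : ℕ} (hqj : q + j ≤ k) (t : ℝ) :
    V * (expTaylor (Vᵀ * A * V) t q * (Vᵀ * (A ^ j * B))) = expTaylor A t q * (A ^ j * B) := by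
  simp only [expTaylor, Matrix.sum_mul, Matrix.mul_sum, Matrix.smul_mul, Matrix.mul_smul]
  refine sum_congr rfl fun i hi => ?_
  rw [krylov_compression_pow_mul hV hspan (by simp at hi; omega), ← Matrix.mul_assoc, ← pow_add]

theorem krylov_error_pow_mul (hV : Vᵀ * V = 1) (hspan : blockKrylov A B k ≤ colSpace V)
    {q j : ℕ} (hqj : q + j ≤ k) :
    (mexp (t • A) - V * mexp (t • (Vᵀ * A * V)) * Vᵀ) * (A ^ j * B) =
      (mexp (t • A) - expTaylor A t q) * (A ^ j * B) -
        V * ((mexp (t • (Vᵀ * A * V)) - expTaylor (Vᵀ * A * V) t q) * (Vᵀ * (A ^ j * B))) := by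
  rw [Matrix.sub_mul, Matrix.sub_mul, Matrix.sub_mul, Matrix.mul_sub,
    krylov_compression_expTaylor_mul hV hspan hqj, Matrix.mul_assoc, Matrix.mul_assoc,
    Matrix.mul_assoc]
  abel

theorem norm_krylov_error_le (hV : Vᵀ * V = 1) (hA : ∀ x, x ⬝ᵥ A *ᵥ x ≤ c * (x ⬝ᵥ x))
    (ht : 0 ≤ t) :
    ‖mexp (t • A) - V * mexp (t • (Vᵀ * A * V)) * Vᵀ‖ ≤ 2 * Real.exp (t * c) := by
  have hH := Matrix.dotProduct_mulVec_compression_le hV hA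
  have h1 : ‖V * mexp (t • (Vᵀ * A * V)) * Vᵀ‖ ≤ ‖mexp (t • (Vᵀ * A * V))‖ :=
    Matrix.l2_opNorm_mul_mul_le_of_le_one _
      (Matrix.l2_opNorm_le_one_of_transpose_mul_self_eq_one hV)
      (Matrix.l2_opNorm_transpose_le_one_of_transpose_mul_self_eq_one hV)
  have h2 : ‖mexp (t • A)‖ ≤ Real.exp (t * c) :=
    Matrix.norm_exp_smul_le_of_dotProduct_mulVec_le A hA ht
  have h3 : ‖mexp (t • (Vᵀ * A * V))‖ ≤ Real.exp (t * c) :=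
    Matrix.norm_exp_smul_le_of_dotProduct_mulVec_le _ hH ht
  linarith [norm_sub_le (mexp (t • A)) (V * mexp (t • (Vᵀ * A * V)) * Vᵀ)]

theorem norm_krylov_error_pow_mul_le (hV : Vᵀ * V = 1) (hspan : blockKrylov A B k ≤ colSpace V)
    (hA : ∀ x, x ⬝ᵥ A *ᵥ x ≤ c * (x ⬝ᵥ x)) (ht : 0 ≤ t) {j : ℕ} (hj : j ≤ k) :
    ‖(mexp (t • A) - V * mexp (t • (Vᵀ * A * V)) * Vᵀ) * (A ^ j * B)‖ ≤
      2 * max 1 (Real.exp (t * c)) * (t ^ (k - j) / (k - j).factorial * ‖A‖ ^ k) * ‖B‖ := by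
  obtain ⟨q, rfl⟩ : ∃ q, k = q + j := ⟨k - j, by omega⟩
  rw [Nat.add_sub_cancel, krylov_error_pow_mul hV hspan le_rfl]
  have hVn := Matrix.l2_opNorm_le_one_of_transpose_mul_self_eq_one hV
  have hVtn := Matrix.l2_opNorm_transpose_le_one_of_transpose_mul_self_eq_one hV
  set M := max 1 (Real.exp (t * c))
  have hAjB : ‖A ^ j * B‖ ≤ ‖A‖ ^ j * ‖B‖ := Matrix.l2_opNorm_pow_mul_le A B j
  have hRA : ‖mexp (t • A) - expTaylor A t q‖ ≤ M * (t ^ q * ‖A‖ ^ q / q.factorial) :=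
    Matrix.norm_exp_smul_sub_expTaylor_le_of_dotProduct_mulVec_le hA ht q
  have hRH : ‖mexp (t • (Vᵀ * A * V)) - expTaylor (Vᵀ * A * V) t q‖ ≤
      M * (t ^ q * ‖A‖ ^ q / q.factorial) := by
    refine (Matrix.norm_exp_smul_sub_expTaylor_le_of_dotProduct_mulVec_le
      (Matrix.dotProduct_mulVec_compression_le hV hA) ht q).trans ?_
    gcongr
    exact Matrix.l2_opNorm_mul_mul_le_of_le_one A hVtn hVn
  have h1 : ‖(mexp (t • A) - expTaylor A t q) * (A ^ j * B)‖ ≤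
      M * (t ^ q * ‖A‖ ^ q / q.factorial) * (‖A‖ ^ j * ‖B‖) :=
    (Matrix.l2_opNorm_mul _ _).trans (mul_le_mul hRA hAjB (norm_nonneg _) (by positivity))
  have h2 : ‖V * ((mexp (t • (Vᵀ * A * V)) - expTaylor (Vᵀ * A * V) t q) * (Vᵀ * (A ^ j * B)))‖ ≤
      M * (t ^ q * ‖A‖ ^ q / q.factorial) * (‖A‖ ^ j * ‖B‖) := by
    rw [← Matrix.mul_assoc, ← Matrix.mul_assoc]
    exact (Matrix.l2_opNorm_mul _ _).trans (mul_le_mul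
      ((Matrix.l2_opNorm_mul_mul_le_of_le_one _ hVn hVtn).trans hRH) hAjB (norm_nonneg _)
      (by positivity))
  calc _ ≤ _ := norm_sub_le _ _
    _ ≤ _ := add_le_add h1 h2
    _ = _ := by rw [pow_add]; ring

theorem norm_krylov_error_mul_remainder_le (hV : Vᵀ * V = 1)
    (hA : ∀ x, x ⬝ᵥ A *ᵥ x ≤ c * (x ⬝ᵥ x)) (ht : 0 ≤ t) (hs : 0 ≤ s) :
    ‖(mexp (t • A) - V * mexp (t • (Vᵀ * A * V)) * Vᵀ) * ((mexp (s • A) - expTaylor A s k) * B)‖ ≤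
      2 * max 1 (Real.exp ((t + s) * c)) * ‖A‖ ^ k * ‖B‖ * (s ^ k / k.factorial) := by
  have hE := norm_krylov_error_le hV hA ht
  have hR := Matrix.norm_exp_smul_sub_expTaylor_le_of_dotProduct_mulVec_le hA hs k
  have hM : Real.exp (t * c) * max 1 (Real.exp (s * c)) ≤ max 1 (Real.exp ((t + s) * c)) := by
    rw [mul_max_of_nonneg _ _ (Real.exp_pos _).le, mul_one, ← Real.exp_add, ← add_mul]
    exact max_le (exp_mul_le_max_one_exp ht (by linarith)) (le_max_right _ _)
  calc _ ≤ ‖mexp (t • A) - V * mexp (t • (Vᵀ * A * V)) * Vᵀ‖ *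
        (‖mexp (s • A) - expTaylor A s k‖ * ‖B‖) :=
        (Matrix.l2_opNorm_mul _ _).trans
          (mul_le_mul_of_nonneg_left (Matrix.l2_opNorm_mul _ _) (norm_nonneg _))
    _ ≤ 2 * Real.exp (t * c) *
        (max 1 (Real.exp (s * c)) * (s ^ k * ‖A‖ ^ k / k.factorial) * ‖B‖) := by
        gcongr
        exact hR
    _ = 2 * (Real.exp (t * c) * max 1 (Real.exp (s * c))) * ‖A‖ ^ k * ‖B‖ *
        (s ^ k / k.factorial) := by ring
    _ ≤ _ := by gcongr

theorem norm_sum_krylov_error_pow_mul_le (hV : Vᵀ * V = 1)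
    (hspan : blockKrylov A B k ≤ colSpace V) (hA : ∀ x, x ⬝ᵥ A *ᵥ x ≤ c * (x ⬝ᵥ x))
    (ht : 0 ≤ t) (hs : 0 ≤ s) :
    ‖∑ j ∈ range k, (s ^ j / j.factorial) •
        ((mexp (t • A) - V * mexp (t • (Vᵀ * A * V)) * Vᵀ) * (A ^ j * B))‖ ≤
      2 * max 1 (Real.exp ((t + s) * c)) * ‖A‖ ^ k * ‖B‖ *
        ∑ j ∈ range k, s ^ j / j.factorial * (t ^ (k - j) / (k - j).factorial) := by
  have hM : max 1 (Real.exp (t * c)) ≤ max 1 (Real.exp ((t + s) * c)) :=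
    max_le (le_max_left _ _) (exp_mul_le_max_one_exp ht (by linarith))
  rw [mul_sum]
  refine (norm_sum_le _ _).trans (sum_le_sum fun j hj => ?_)
  rw [norm_smul, Real.norm_of_nonneg (by positivity)]
  calc _ ≤ s ^ j / j.factorial * (2 * max 1 (Real.exp ((t + s) * c)) *
        (t ^ (k - j) / (k - j).factorial * ‖A‖ ^ k) * ‖B‖) := by
        gcongr
        exact (norm_krylov_error_pow_mul_le hV hspan hA ht (mem_range.mp hj).le).trans
          (by gcongr)
    _ = _ := by ring

theorem norm_krylov_error_mul_exp_mul_le (hV : Vᵀ * V = 1)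
    (hspan : blockKrylov A B k ≤ colSpace V) (hA : ∀ x, x ⬝ᵥ A *ᵥ x ≤ c * (x ⬝ᵥ x))
    (ht : 0 ≤ t) (hs : 0 ≤ s) :
    ‖(mexp (t • A) - V * mexp (t • (Vᵀ * A * V)) * Vᵀ) * (mexp (s • A) * B)‖ ≤
      2 * max 1 (Real.exp ((t + s) * c)) * ‖A‖ ^ k * ‖B‖ * ((t + s) ^ k / k.factorial) := by
  set E := mexp (t • A) - V * mexp (t • (Vᵀ * A * V)) * Vᵀ
  have hsplit : E * (mexp (s • A) * B) = E * ((mexp (s • A) - expTaylor A s k) * B) +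
      ∑ j ∈ range k, (s ^ j / j.factorial) • (E * (A ^ j * B)) := by
    simp only [expTaylor, Matrix.sub_mul, Matrix.sum_mul, Matrix.mul_sub, Matrix.mul_sum,
      Matrix.smul_mul, Matrix.mul_smul]
    abel
  rw [hsplit, add_pow_div_factorial_eq_sum, sum_range_succ, Nat.sub_self, pow_zero,
    Nat.factorial_zero, Nat.cast_one, div_one, mul_one, mul_add]
  exact (norm_add_le _ _).trans ((add_le_add (norm_krylov_error_mul_remainder_le hV hA ht hs)
    (norm_sum_krylov_error_pow_mul_le hV hspan hA ht hs)).trans_eq (add_comm _ _))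

end Krylov

/-- Lemma A.2: if the column space of `V_k` contains `K_k(A,B)` and
`H_k = V_kᵀ A V_k`, then for all `t, s > 0`,
`‖(e^{tA} − V_k e^{tH_k} V_kᵀ) e^{sA} B‖ ≤ 4 max{1, e^{(t+s)μ(A)}} ‖(t+s)A‖^k/k! ‖B‖`. -/
theorem krylov_exp_shifted_error {n ℓ m : ℕ} (A : Matrix (Fin n) (Fin n) ℝ)
    (B : Matrix (Fin n) (Fin ℓ) ℝ) (k : ℕ)
    (V : Matrix (Fin n) (Fin m) ℝ) (hV : Vᵀ * V = 1)
    (hspan : blockKrylov A B k ≤ colSpace V) :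
    ∀ t s : ℝ, 0 < t → 0 < s →
      ‖(mexp (t • A) - V * mexp (t • (Vᵀ * A * V)) * Vᵀ) * (mexp (s • A) * B)‖ ≤
        4 * max 1 (Real.exp ((t + s) * logNorm A)) *
          (‖(t + s) • A‖ ^ k / (Nat.factorial k : ℝ)) * ‖B‖ := by
  intro t s ht hs
  have hbound := norm_krylov_error_mul_exp_mul_le hV hspan (dotProduct_mulVec_le_logNorm A)
    ht.le hs.le
  rw [norm_smul, Real.norm_of_nonneg (by positivity), mul_pow]
  have hnonneg : 0 ≤ max 1 (Real.exp ((t + s) * logNorm A)) * ‖A‖ ^ k * ‖B‖ *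
      ((t + s) ^ k / k.factorial) := by positivity
  rw [mul_div_right_comm]
  linarith

end
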